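/- arXiv:math/0306407 — 4 statements merged into one kernel-verified Lean document; each statement's English description precedes it below -/
import Mathlib

section
/- Fix τ ∈ W' \ W. The induced bijection τ̂ : W\X → W\X, O_W(A) ↦ O_W(τA), satisfies τ̂(a) ≼_W τ̂(b) if and only if a ≼_W b for all a, b ∈ W\X; moreover τ̂ fixes every W-orbit which is itself a W'-orbit, and interchanges the two W-orbits contained in any W'-orbit that is a union of two distinct W-orbits. (In the chemical interpretation: the two members of a chiral pair are indistinguishable via substitution reactions.) -/
variable {G X : Type*} [Group G] [MulAction G X]

/-- The relation `≼_H` induced on the orbit space `H\X` by a relation `≤` on `X`: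
`a ≼_H b` iff there exist representatives `A ∈ a`, `B ∈ b` with `A ≤ B`. -/
def OrbLE (H : Subgroup G) (le : X → X → Prop)
    (a b : Quotient (MulAction.orbitRel H X)) : Prop :=
  ∃ A B : X, Quotient.mk (MulAction.orbitRel H X) A = a ∧
    Quotient.mk (MulAction.orbitRel H X) B = b ∧ le A B

lemma mul_mem_aux {W W' : Subgroup G} (hidx : (W.subgroupOf W').index = 2)
    {x y : G} (hx : x ∈ W') (hy : y ∈ W') :
    x * y ∈ W ↔ (x ∈ W ↔ y ∈ W) := by
  have := Subgroup.mul_mem_iff_of_index_two hidx (a := ⟨x, hx⟩) (b := ⟨y, hy⟩)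
  simpa [Subgroup.mem_subgroupOf] using this

lemma mk_smul_eq {W : Subgroup G} {w : G} (hw : w ∈ W) (A : X) :
    Quotient.mk (MulAction.orbitRel W X) (w • A)
      = Quotient.mk (MulAction.orbitRel W X) A := by
  exact Quotient.sound ⟨⟨w, hw⟩, rfl⟩

/-- Let `≤` be a `G`-invariant preorder on `X` and `W ≤ W'`
subgroups with `W` of index 2 in `W'`; fix `τ ∈ W' \ W`.  The induced bijection
`τ̂ : W\X → W\X`, `O_W(A) ↦ O_W(τA)`, satisfies `τ̂ a ≼_W τ̂ b ↔ a ≼_W b`;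
it fixes every `W`-orbit which is itself a `W'`-orbit, and interchanges the two
`W`-orbits contained in any `W'`-orbit that is a union of two distinct `W`-orbits
(the members of a chiral pair are indistinguishable via substitution reactions). -/
theorem lunn_senior_stmt12 (W W' : Subgroup G) (hWW' : W ≤ W')
    (hidx : (W.subgroupOf W').index = 2)
    (le : X → X → Prop) (hrefl : ∀ A, le A A)
    (htrans : ∀ A B C, le A B → le B C → le A C)
    (hinv : ∀ (ζ : G) (A B : X), le A B ↔ le (ζ • A) (ζ • B))
    (τ : G) (hτW' : τ ∈ W') (hτW : τ ∉ W)
    (f : Quotient (MulAction.orbitRel W X) → Quotient (MulAction.orbitRel W X))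
    (hf : ∀ A : X, f (Quotient.mk (MulAction.orbitRel W X) A)
        = Quotient.mk (MulAction.orbitRel W X) (τ • A)) :
    (∀ a b, OrbLE W le (f a) (f b) ↔ OrbLE W le a b) ∧
    (∀ A : X, (∀ B ∈ MulAction.orbit W' A,
        Quotient.mk (MulAction.orbitRel W X) B = Quotient.mk (MulAction.orbitRel W X) A) →
      f (Quotient.mk (MulAction.orbitRel W X) A) = Quotient.mk (MulAction.orbitRel W X) A) ∧
    (∀ A B : X, B ∈ MulAction.orbit W' A →
      Quotient.mk (MulAction.orbitRel W X) B ≠ Quotient.mk (MulAction.orbitRel W X) A →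
      f (Quotient.mk (MulAction.orbitRel W X) A) = Quotient.mk (MulAction.orbitRel W X) B ∧
      f (Quotient.mk (MulAction.orbitRel W X) B)
        = Quotient.mk (MulAction.orbitRel W X) A) := by
  refine ⟨?_, ?_, ?_⟩
  · -- order part
    intro a b
    constructor
    · rintro ⟨A, B, hA, hB, hAB⟩
      obtain ⟨A0, rfl⟩ := Quotient.exists_rep a
      obtain ⟨B0, rfl⟩ := Quotient.exists_rep b
      rw [hf] at hA hB
      -- A is in the W-orbit of τ • A0
      have hA' : A ∈ MulAction.orbit W (τ • A0) := Quotient.eq''.mp hA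
      have hB' : B ∈ MulAction.orbit W (τ • B0) := Quotient.eq''.mp hB
      obtain ⟨⟨w, hw⟩, hwA⟩ := hA'
      obtain ⟨⟨v, hv⟩, hvB⟩ := hB'
      refine ⟨τ⁻¹ • A, τ⁻¹ • B, ?_, ?_, (hinv τ⁻¹ A B).mp hAB⟩
      · have : τ⁻¹ • A = (τ⁻¹ * w * τ) • A0 := by
          rw [← hwA]; simp [mul_smul]
        rw [this]
        refine mk_smul_eq ?_ A0
        have : τ⁻¹ * w ∈ W ↔ (τ⁻¹ ∈ W ↔ w ∈ W) :=
          mul_mem_aux hidx (inv_mem hτW') (hWW' hw)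
        have h1 : τ⁻¹ * w ∉ W := by
          rw [this]; simp [hw, hτW]
        have := mul_mem_aux hidx (W'.mul_mem (inv_mem hτW') (hWW' hw)) hτW'
        rw [this]; simp [h1, hτW]
      · have : τ⁻¹ • B = (τ⁻¹ * v * τ) • B0 := by
          rw [← hvB]; simp [mul_smul]
        rw [this]
        refine mk_smul_eq ?_ B0
        have h1 : τ⁻¹ * v ∉ W := by
          rw [mul_mem_aux hidx (inv_mem hτW') (hWW' hv)]
          simp [hv, hτW]
        rw [mul_mem_aux hidx (W'.mul_mem (inv_mem hτW') (hWW' hv)) hτW']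
        simp [h1, hτW]
    · rintro ⟨A, B, rfl, rfl, hAB⟩
      exact ⟨τ • A, τ • B, (hf A).symm, (hf B).symm, (hinv τ A B).mp hAB⟩
  · intro A h
    rw [hf]
    exact h (τ • A) ⟨⟨τ, hτW'⟩, rfl⟩
  · intro A B hBA hne
    obtain ⟨⟨g, hg⟩, rfl⟩ := hBA
    have hgW : g ∉ W := by
      intro hgW
      exact hne (mk_smul_eq hgW A)
    constructor
    · rw [hf]
      have : τ • A = (τ * g⁻¹) • ((⟨g, hg⟩ : W') • A) := by
        show τ • A = (τ * g⁻¹) • (g • A)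
        simp [mul_smul]
      rw [this]
      refine mk_smul_eq ?_ _
      rw [mul_mem_aux hidx hτW' (inv_mem hg)]
      simp [hτW, hgW]
    · rw [hf]
      have : τ • ((⟨g, hg⟩ : W') • A) = (τ * g) • A := by
        show τ • (g • A) = (τ * g) • A
        simp [mul_smul]
      rw [this]
      refine mk_smul_eq ?_ _
      rw [mul_mem_aux hidx hτW' hg]
      simp [hτW, hgW]
end

section
/- Suppose G is a finite group. For every ν in the normalizer N of W in G, the number of (νχ,θ)-orbits equals the number of (χ,θ)-orbits: |S(νχ,θ)| = |S(χ,θ)|; in particular, taking θ to be the trivial character of H, the number of W-orbits a such that χ(σ) = 1 for all σ ∈ W stabilizing a point of a equals the corresponding number for νχ. -/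
/-!
Conjugation by `ν` in the normalizer of `W` permutes the `W`-orbits of `G/H` (`a ↦ ν • a`), and
`(σ, υ) ↦ (νσν⁻¹, νυ)` transports the defining condition: `a` is a `(χ,θ)`-orbit exactly when
`ν • a` is a `(νχ,θ)`-orbit, because `(νυ)⁻¹(νσν⁻¹)(νυ) = υ⁻¹συ`. Hence the two sets of orbits are
in bijection. A `χ`-orbit is a `(χ,1)`-orbit, since `σ` fixes `υH` iff `υ⁻¹συ ∈ H`.
-/

/-- The conjugate character `νχ : W → ℂˣ`, `(νχ)(σ) = χ(ν⁻¹σν)`, of a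
one-dimensional character `χ` of `W` by an element `ν` of the normalizer of `W`. -/
def conjChar {G : Type*} [Group G] {W : Subgroup G} (ν : G) (hν : ν ∈ Subgroup.normalizer (W : Set G))
    (χ : W →* ℂˣ) : W →* ℂˣ where
  toFun σ := χ ⟨ν⁻¹ * (σ : G) * ν, by
    have h := (Subgroup.mem_normalizer_iff.mp (Subgroup.inv_mem _ hν) (σ : G)).mp σ.2
    simpa using h⟩
  map_one' := by
    rw [← χ.map_one]
    apply congrArg
    ext
    simp
  map_mul' σ τ := by
    show χ _ = χ _ * χ _
    rw [← χ.map_mul]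
    apply congrArg
    ext
    push_cast
    group

/-- A `W`-orbit `a` in `G/H` is a `(χ,θ)`-orbit if for every `υ ∈ G` with
`υH ∈ a` and every `σ ∈ W` with `υ⁻¹συ ∈ H` one has `χ(σ)·θ(υ⁻¹συ) = 1`. -/
def IsChiThetaOrbit {G : Type*} [Group G] {H W : Subgroup G}
    (χ : W →* ℂˣ) (θ : H →* ℂˣ)
    (a : Quotient (MulAction.orbitRel W (G ⧸ H))) : Prop :=
  ∀ υ : G, Quotient.mk (MulAction.orbitRel W (G ⧸ H)) (υ : G ⧸ H) = a →
    ∀ (σ : W) (hσ : υ⁻¹ * (σ : G) * υ ∈ H),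
      χ σ * θ ⟨υ⁻¹ * (σ : G) * υ, hσ⟩ = 1

/-- A `W`-orbit `a` in `G/H` is a `χ`-orbit if `χ(σ) = 1` for every `σ ∈ W`
stabilizing a point of `a` (the case `θ = 1` of a `(χ,θ)`-orbit). -/
def IsChiOrbit {G : Type*} [Group G] {H W : Subgroup G} (χ : W →* ℂˣ)
    (a : Quotient (MulAction.orbitRel W (G ⧸ H))) : Prop :=
  ∀ υ : G, Quotient.mk (MulAction.orbitRel W (G ⧸ H)) (υ : G ⧸ H) = a →
    ∀ σ : W, (σ : G) • (υ : G ⧸ H) = (υ : G ⧸ H) → χ σ = 1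

section

variable {G : Type*} [Group G] {H W : Subgroup G}

theorem conjChar_conjChar_inv (ν : G) (hν : ν ∈ Subgroup.normalizer (W : Set G))
    (χ : W →* ℂˣ) : conjChar ν⁻¹ (inv_mem hν) (conjChar ν hν χ) = χ := by
  ext σ
  simp only [conjChar, MonoidHom.coe_mk, OneHom.coe_mk, inv_inv]
  congr 2
  ext
  group

theorem orbitRel_smul_of_mem_normalizer {X : Type*} [MulAction G X] {ν : G}
    (hν : ν ∈ Subgroup.normalizer (W : Set G)) {x y : X}
    (h : MulAction.orbitRel W X x y) : MulAction.orbitRel W X (ν • x) (ν • y) := by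
  obtain ⟨σ, rfl⟩ := h
  refine ⟨⟨ν * σ * ν⁻¹, (Subgroup.mem_normalizer_iff.mp hν σ).mp σ.2⟩, ?_⟩
  show (ν * σ * ν⁻¹) • ν • y = ν • (σ : G) • y
  rw [smul_smul, inv_mul_cancel_right, mul_smul]

def orbitSmulEquiv (X : Type*) [MulAction G X] (ν : G)
    (hν : ν ∈ Subgroup.normalizer (W : Set G)) :
    Quotient (MulAction.orbitRel W X) ≃ Quotient (MulAction.orbitRel W X) where
  toFun := Quotient.map (ν • ·) fun _ _ ↦ orbitRel_smul_of_mem_normalizer hν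
  invFun := Quotient.map (ν⁻¹ • ·) fun _ _ ↦ orbitRel_smul_of_mem_normalizer (inv_mem hν)
  left_inv := Quotient.ind fun x ↦ by simp [Quotient.map_mk]
  right_inv := Quotient.ind fun x ↦ by simp [Quotient.map_mk]

theorem orbitSmulEquiv_inv_apply (X : Type*) [MulAction G X] (ν : G)
    (hν : ν ∈ Subgroup.normalizer (W : Set G)) (a : Quotient (MulAction.orbitRel W X)) :
    orbitSmulEquiv X ν⁻¹ (inv_mem hν) (orbitSmulEquiv X ν hν a) = a :=
  (orbitSmulEquiv X ν hν).symm_apply_apply a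

theorem IsChiThetaOrbit.map_orbitSmulEquiv {χ : W →* ℂˣ} {θ : H →* ℂˣ}
    {a : Quotient (MulAction.orbitRel W (G ⧸ H))} (h : IsChiThetaOrbit χ θ a) (ν : G)
    (hν : ν ∈ Subgroup.normalizer (W : Set G)) :
    IsChiThetaOrbit (conjChar ν hν χ) θ (orbitSmulEquiv (G ⧸ H) ν hν a) := by
  intro υ hυ σ hσ
  have ha : Quotient.mk _ ((ν⁻¹ * υ : G) : G ⧸ H) = a := by
    rw [← (orbitSmulEquiv (G ⧸ H) ν hν).symm_apply_apply a, ← hυ]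
    rfl
  have hτ : ν⁻¹ * σ * ν ∈ W := (Subgroup.mem_normalizer_iff''.mp hν σ).mp σ.2
  have hconj : (ν⁻¹ * υ)⁻¹ * (ν⁻¹ * σ * ν) * (ν⁻¹ * υ) = υ⁻¹ * σ * υ := by group
  show χ ⟨_, hτ⟩ * θ ⟨_, hσ⟩ = 1
  simpa only [hconj] using h (ν⁻¹ * υ) ha ⟨_, hτ⟩ (hconj ▸ hσ)

theorem isChiThetaOrbit_conjChar_iff (χ : W →* ℂˣ) (θ : H →* ℂˣ) (ν : G)
    (hν : ν ∈ Subgroup.normalizer (W : Set G)) (a : Quotient (MulAction.orbitRel W (G ⧸ H))) :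
    IsChiThetaOrbit (conjChar ν hν χ) θ (orbitSmulEquiv (G ⧸ H) ν hν a) ↔
      IsChiThetaOrbit χ θ a := by
  refine ⟨fun h ↦ ?_, fun h ↦ h.map_orbitSmulEquiv ν hν⟩
  have := h.map_orbitSmulEquiv ν⁻¹ (inv_mem hν)
  rwa [conjChar_conjChar_inv, orbitSmulEquiv_inv_apply (G ⧸ H) ν hν a] at this

theorem card_isChiThetaOrbit_conjChar (χ : W →* ℂˣ) (θ : H →* ℂˣ) (ν : G)
    (hν : ν ∈ Subgroup.normalizer (W : Set G)) :
    Nat.card {a : Quotient (MulAction.orbitRel W (G ⧸ H)) //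
        IsChiThetaOrbit (conjChar ν hν χ) θ a}
      = Nat.card {a : Quotient (MulAction.orbitRel W (G ⧸ H)) // IsChiThetaOrbit χ θ a} :=
  (Nat.card_congr <| (orbitSmulEquiv (G ⧸ H) ν hν).subtypeEquiv fun a ↦
    (isChiThetaOrbit_conjChar_iff χ θ ν hν a).symm).symm

theorem smul_coe_eq_self_iff (g υ : G) :
    g • (υ : G ⧸ H) = υ ↔ υ⁻¹ * g * υ ∈ H := by
  rw [MulAction.Quotient.smul_coe, eq_comm, QuotientGroup.eq, smul_eq_mul, mul_assoc]

theorem isChiOrbit_iff_isChiThetaOrbit_one (χ : W →* ℂˣ)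
    (a : Quotient (MulAction.orbitRel W (G ⧸ H))) :
    IsChiOrbit χ a ↔ IsChiThetaOrbit χ (1 : H →* ℂˣ) a := by
  simp only [IsChiOrbit, IsChiThetaOrbit, smul_coe_eq_self_iff, MonoidHom.one_apply, mul_one]

end

theorem lunn_senior_stmt14_general {G : Type*} [Group G] (H W : Subgroup G)
    (χ : W →* ℂˣ) (θ : H →* ℂˣ) (ν : G) (hν : ν ∈ Subgroup.normalizer (W : Set G)) :
    Nat.card {a : Quotient (MulAction.orbitRel W (G ⧸ H)) //
        IsChiThetaOrbit (conjChar ν hν χ) θ a}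
      = Nat.card {a : Quotient (MulAction.orbitRel W (G ⧸ H)) // IsChiThetaOrbit χ θ a} ∧
    Nat.card {a : Quotient (MulAction.orbitRel W (G ⧸ H)) //
        IsChiOrbit (conjChar ν hν χ) a}
      = Nat.card {a : Quotient (MulAction.orbitRel W (G ⧸ H)) // IsChiOrbit χ a} := by
  simp only [isChiOrbit_iff_isChiThetaOrbit_one]
  exact ⟨card_isChiThetaOrbit_conjChar χ θ ν hν, card_isChiThetaOrbit_conjChar χ 1 ν hν⟩

/-- Suppose `G` is finite.  For `ν` in the normalizer of `W`,
the number of `(νχ,θ)`-orbits equals the number of `(χ,θ)`-orbits; in particular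
(taking `θ` trivial) the number of `νχ`-orbits equals the number of `χ`-orbits. -/
theorem lunn_senior_stmt14 {G : Type*} [Group G] [Finite G] (H W : Subgroup G)
    (χ : W →* ℂˣ) (θ : H →* ℂˣ) (ν : G) (hν : ν ∈ Subgroup.normalizer (W : Set G)) :
    Nat.card {a : Quotient (MulAction.orbitRel W (G ⧸ H)) //
        IsChiThetaOrbit (conjChar ν hν χ) θ a}
      = Nat.card {a : Quotient (MulAction.orbitRel W (G ⧸ H)) // IsChiThetaOrbit χ θ a} ∧
    Nat.card {a : Quotient (MulAction.orbitRel W (G ⧸ H)) //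
        IsChiOrbit (conjChar ν hν χ) a}
      = Nat.card {a : Quotient (MulAction.orbitRel W (G ⧸ H)) // IsChiOrbit χ a} :=
  lunn_senior_stmt14_general H W χ θ ν hν
end

section
/- The group of level-preserving order automorphisms of the poset P (bijections α : P → P with ℓ(α(x)) = ℓ(x) for all x and with α(x) ≤ α(y) if and only if x ≤ y) is isomorphic to the direct product S₃ × S₆, where the S₃-factor simultaneously permutes the three chains (a₂₂, a₂₁₁), (b₂₂, b₂₁₁), (c₂₂, c₂₁₁) and the S₆-factor consists of all permutations of the six bottom elements a₁₄, b₁₄, c₁₄, e₁₄, f₁₄, h₁₄. -/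
/-- The 14 substitution isomers of ethene (the poset `T₍₄;G₎`, `G` the Klein four
group in `S₄`). -/
inductive EthP : Type
  | a4 | a31 | a22 | b22 | c22 | a211 | b211 | c211
  | a14 | b14 | c14 | e14 | f14 | h14
  deriving DecidableEq

open EthP in
/-- The level function: 4 for `a₄`, 3 for `a₃₁`, 2 for the `(2²)`-row, 1 for the
`(2,1²)`-row, 0 for the `(1⁴)`-row. -/
def ethLevel : EthP → ℕ
  | a4 => 4
  | a31 => 3
  | a22 | b22 | c22 => 2
  | a211 | b211 | c211 => 1
  | a14 | b14 | c14 | e14 | f14 | h14 => 0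

open EthP in
/-- The covering relations of the ethene poset. -/
def ethCovers : List (EthP × EthP) :=
  [(a31, a4),
   (a22, a31), (b22, a31), (c22, a31),
   (a211, a22), (b211, b22), (c211, c22),
   (a14, a211), (b14, a211), (c14, a211), (e14, a211), (f14, a211), (h14, a211),
   (a14, b211), (b14, b211), (c14, b211), (e14, b211), (f14, b211), (h14, b211),
   (a14, c211), (b14, c211), (c14, c211), (e14, c211), (f14, c211), (h14, c211)]

/-- The partial order of the ethene poset: the reflexive-transitive closure of the
covering relations. -/
def ethLE : EthP → EthP → Prop :=
  Relation.ReflTransGen (fun x y => (x, y) ∈ ethCovers)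

/-- The group of level-preserving order automorphisms of the ethene poset. -/
def ethAut : Subgroup (Equiv.Perm EthP) where
  carrier := {α | (∀ x, ethLevel (α x) = ethLevel x) ∧
    ∀ x y, ethLE (α x) (α y) ↔ ethLE x y}
  one_mem' := by
    constructor <;> simp
  mul_mem' := by
    rintro α β ⟨hα1, hα2⟩ ⟨hβ1, hβ2⟩
    constructor
    · intro x
      simp only [Equiv.Perm.mul_apply]
      rw [hα1, hβ1]
    · intro x y
      simp only [Equiv.Perm.mul_apply]
      rw [hα2, hβ2]
  inv_mem' := by
    rintro α ⟨hα1, hα2⟩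
    constructor
    · intro x
      conv_rhs => rw [← (show α (α⁻¹ x) = x from Equiv.apply_symm_apply α x)]
      rw [hα1]
    · intro x y
      conv_rhs => rw [← (show α (α⁻¹ x) = x from Equiv.apply_symm_apply α x), ← (show α (α⁻¹ y) = y from Equiv.apply_symm_apply α y)]
      rw [hα2]

/-- The `(2²)`-row indexed by `{a, b, c}`. -/
def eth22 : Fin 3 → EthP := ![EthP.a22, EthP.b22, EthP.c22]

/-- The `(2,1²)`-row indexed by `{a, b, c}`. -/
def eth211 : Fin 3 → EthP := ![EthP.a211, EthP.b211, EthP.c211]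

/-- The `(1⁴)`-row (the six bottom elements). -/
def eth14 : Fin 6 → EthP :=
  ![EthP.a14, EthP.b14, EthP.c14, EthP.e14, EthP.f14, EthP.h14]


/-!
A level-preserving automorphism permutes each level. The permutation `π` it induces on the
`(2²)`-row also governs the `(2,1²)`-row, because `x₂₁₁` lies below `y₂₂` only when `x = y`,
while the permutation `ρ` of the bottom row is unconstrained, since every bottom element lies
below every `x₂₁₁`. Conversely, for any `(π, ρ)` the induced map sends covering pairs to covering
pairs, hence is an order automorphism.
-/

open Function

theorem exists_perm_apply_eq_of_apply_mem_range {ι β : Type*} [Finite ι] {e : ι → β}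
    (he : Injective e) (α : Equiv.Perm β) (h : ∀ i, α (e i) ∈ Set.range e) :
    ∃ π : Equiv.Perm ι, ∀ i, α (e i) = e (π i) := by
  choose f hf using h
  have hf_inj : Injective f := fun i j hij =>
    he (α.injective (by rw [← hf i, ← hf j, hij]))
  exact ⟨Equiv.ofBijective f (Finite.injective_iff_bijective.mp hf_inj), fun i => (hf i).symm⟩

open EthP

instance : Fintype EthP :=
  Fintype.ofList [a4, a31, a22, b22, c22, a211, b211, c211, a14, b14, c14, e14, f14, h14]
    (by intro x; cases x <;> decide)

theorem EthP.forall_rows {P : EthP → Prop} (h4 : P a4) (h31 : P a31) (h22 : ∀ i, P (eth22 i))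
    (h211 : ∀ i, P (eth211 i)) (h14 : ∀ j, P (eth14 j)) : ∀ x, P x := by
  intro x
  cases x
  exacts [h4, h31, h22 0, h22 1, h22 2, h211 0, h211 1, h211 2,
    h14 0, h14 1, h14 2, h14 3, h14 4, h14 5]

theorem eth22_injective : Injective eth22 := by decide

theorem eth14_injective : Injective eth14 := by decide

theorem ethLevel_eth22 : ∀ i, ethLevel (eth22 i) = 2 := by decide

theorem ethLevel_eth211 : ∀ i, ethLevel (eth211 i) = 1 := by decide

theorem ethLevel_eth14 : ∀ j, ethLevel (eth14 j) = 0 := by decide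

theorem eq_a4_of_ethLevel_eq_four : ∀ x, ethLevel x = 4 → x = a4 := by decide

theorem eq_a31_of_ethLevel_eq_three : ∀ x, ethLevel x = 3 → x = a31 := by decide

theorem mem_range_eth22_of_ethLevel_eq_two : ∀ x, ethLevel x = 2 → x ∈ Set.range eth22 := by
  decide

theorem mem_range_eth211_of_ethLevel_eq_one : ∀ x, ethLevel x = 1 → x ∈ Set.range eth211 := by
  decide

theorem mem_range_eth14_of_ethLevel_eq_zero : ∀ x, ethLevel x = 0 → x ∈ Set.range eth14 := by
  decide

theorem mem_ethCovers_iff : ∀ x y, (x, y) ∈ ethCovers ↔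
    (x = a31 ∧ y = a4) ∨ (∃ i, x = eth22 i ∧ y = a31) ∨ (∃ i, x = eth211 i ∧ y = eth22 i) ∨
      ∃ j i, x = eth14 j ∧ y = eth211 i := by
  decide

theorem ethLE_eth211_eth22 (i : Fin 3) : ethLE (eth211 i) (eth22 i) :=
  .single ((mem_ethCovers_iff _ _).mpr (.inr (.inr (.inl ⟨i, rfl, rfl⟩))))

theorem eq_of_ethLE_eth211_eth22 {i k : Fin 3} (h : ethLE (eth211 i) (eth22 k)) : i = k := by
  have hup : ∀ y, ethLE (eth211 i) y → y = eth211 i ∨ y = eth22 i ∨ y = a31 ∨ y = a4 := by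
    have hstep : ∀ i y z, (y, z) ∈ ethCovers →
        (y = eth211 i ∨ y = eth22 i ∨ y = a31 ∨ y = a4) →
        z = eth211 i ∨ z = eth22 i ∨ z = a31 ∨ z = a4 := by
      decide
    intro y hy
    induction hy with
    | refl => exact .inl rfl
    | tail _ hyz ih => exact hstep i _ _ hyz ih
  have hrow : ∀ i k : Fin 3,
      (eth22 k = eth211 i ∨ eth22 k = eth22 i ∨ eth22 k = a31 ∨ eth22 k = a4) → i = k := by
    decide
  exact hrow i k (hup _ h)

def ethMap (π : Equiv.Perm (Fin 3)) (ρ : Equiv.Perm (Fin 6)) : EthP → EthP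
  | a4 => a4
  | a31 => a31
  | a22 => eth22 (π 0)
  | b22 => eth22 (π 1)
  | c22 => eth22 (π 2)
  | a211 => eth211 (π 0)
  | b211 => eth211 (π 1)
  | c211 => eth211 (π 2)
  | a14 => eth14 (ρ 0)
  | b14 => eth14 (ρ 1)
  | c14 => eth14 (ρ 2)
  | e14 => eth14 (ρ 3)
  | f14 => eth14 (ρ 4)
  | h14 => eth14 (ρ 5)

section ethMap

variable (π : Equiv.Perm (Fin 3)) (ρ : Equiv.Perm (Fin 6))

@[simp] theorem ethMap_a4 : ethMap π ρ a4 = a4 := rfl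

@[simp] theorem ethMap_a31 : ethMap π ρ a31 = a31 := rfl

@[simp] theorem ethMap_eth22 (i : Fin 3) : ethMap π ρ (eth22 i) = eth22 (π i) := by
  fin_cases i <;> rfl

@[simp] theorem ethMap_eth211 (i : Fin 3) : ethMap π ρ (eth211 i) = eth211 (π i) := by
  fin_cases i <;> rfl

@[simp] theorem ethMap_eth14 (j : Fin 6) : ethMap π ρ (eth14 j) = eth14 (ρ j) := by
  fin_cases j <;> rfl

theorem ethMap_one : ethMap 1 1 = id :=
  funext <| EthP.forall_rows rfl rfl (by simp) (by simp) (by simp)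

theorem ethMap_mul (π' : Equiv.Perm (Fin 3)) (ρ' : Equiv.Perm (Fin 6)) :
    ethMap (π * π') (ρ * ρ') = ethMap π ρ ∘ ethMap π' ρ' :=
  funext <| EthP.forall_rows rfl rfl (by simp) (by simp) (by simp)

theorem ethMap_inv_apply (x : EthP) : ethMap π⁻¹ ρ⁻¹ (ethMap π ρ x) = x := by
  simpa [ethMap_one] using congrFun (ethMap_mul π⁻¹ ρ⁻¹ π ρ).symm x

theorem ethMap_apply_inv (x : EthP) : ethMap π ρ (ethMap π⁻¹ ρ⁻¹ x) = x := by
  simpa [ethMap_one] using congrFun (ethMap_mul π ρ π⁻¹ ρ⁻¹).symm x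

theorem ethLevel_ethMap : ∀ x, ethLevel (ethMap π ρ x) = ethLevel x :=
  EthP.forall_rows rfl rfl (by simp [ethLevel_eth22]) (by simp [ethLevel_eth211])
    (by simp [ethLevel_eth14])

theorem ethMap_mem_ethCovers {x y : EthP} (h : (x, y) ∈ ethCovers) :
    (ethMap π ρ x, ethMap π ρ y) ∈ ethCovers := by
  rw [mem_ethCovers_iff] at h ⊢
  rcases h with ⟨rfl, rfl⟩ | ⟨i, rfl, rfl⟩ | ⟨i, rfl, rfl⟩ | ⟨j, i, rfl, rfl⟩
  · exact .inl ⟨rfl, rfl⟩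
  · exact .inr (.inl ⟨π i, by simp⟩)
  · exact .inr (.inr (.inl ⟨π i, by simp⟩))
  · exact .inr (.inr (.inr ⟨ρ j, π i, by simp⟩))

theorem ethLE.ethMap {x y : EthP} (h : ethLE x y) : ethLE (ethMap π ρ x) (ethMap π ρ y) :=
  Relation.ReflTransGen.lift _ (fun _ _ => ethMap_mem_ethCovers π ρ) _ _ h

theorem ethLE_ethMap_iff (x y : EthP) : ethLE (ethMap π ρ x) (ethMap π ρ y) ↔ ethLE x y := by
  refine ⟨fun h => ?_, ethLE.ethMap π ρ⟩
  simpa only [ethMap_inv_apply] using h.ethMap π⁻¹ ρ⁻¹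

def ethEquiv : Equiv.Perm EthP where
  toFun := ethMap π ρ
  invFun := ethMap π⁻¹ ρ⁻¹
  left_inv := ethMap_inv_apply π ρ
  right_inv := ethMap_apply_inv π ρ

theorem ethEquiv_mem_ethAut : ethEquiv π ρ ∈ ethAut :=
  ⟨ethLevel_ethMap π ρ, ethLE_ethMap_iff π ρ⟩

end ethMap

def ethHom : Equiv.Perm (Fin 3) × Equiv.Perm (Fin 6) →* ethAut where
  toFun p := ⟨ethEquiv p.1 p.2, ethEquiv_mem_ethAut p.1 p.2⟩
  map_one' := Subtype.ext <| Equiv.ext <| congrFun ethMap_one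
  map_mul' p q := Subtype.ext <| Equiv.ext <| congrFun (ethMap_mul p.1 p.2 q.1 q.2)

@[simp] theorem ethHom_apply_apply (p : Equiv.Perm (Fin 3) × Equiv.Perm (Fin 6)) (x : EthP) :
    (ethHom p : Equiv.Perm EthP) x = ethMap p.1 p.2 x := rfl

theorem ethHom_injective : Injective ethHom := by
  rw [injective_iff_map_eq_one]
  rintro ⟨π, ρ⟩ h
  have hfix : ∀ x, ethMap π ρ x = x := fun x => by
    simpa using congrArg (fun g : ethAut => (g : Equiv.Perm EthP) x) h
  refine Prod.ext (Equiv.ext fun i => ?_) (Equiv.ext fun j => ?_)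
  · exact eth22_injective (by simpa using hfix (eth22 i))
  · exact eth14_injective (by simpa using hfix (eth14 j))

theorem ethHom_surjective : Surjective ethHom := by
  rintro ⟨α, hlevel, hle⟩
  obtain ⟨π, hπ⟩ := exists_perm_apply_eq_of_apply_mem_range eth22_injective α fun i =>
    mem_range_eth22_of_ethLevel_eq_two _ (by rw [hlevel, ethLevel_eth22])
  obtain ⟨ρ, hρ⟩ := exists_perm_apply_eq_of_apply_mem_range eth14_injective α fun j =>
    mem_range_eth14_of_ethLevel_eq_zero _ (by rw [hlevel, ethLevel_eth14])
  have h211 : ∀ i, α (eth211 i) = eth211 (π i) := by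
    intro i
    obtain ⟨k, hk⟩ := mem_range_eth211_of_ethLevel_eq_one (α (eth211 i))
      (by rw [hlevel, ethLevel_eth211])
    have hle' := (hle _ _).mpr (ethLE_eth211_eth22 i)
    rw [← hk, hπ] at hle'
    rw [← hk, eq_of_ethLE_eth211_eth22 hle']
  refine ⟨(π, ρ), Subtype.ext <| Equiv.ext <| EthP.forall_rows ?_ ?_ ?_ ?_ ?_⟩
  · exact (eq_a4_of_ethLevel_eq_four _ (hlevel a4)).symm
  · exact (eq_a31_of_ethLevel_eq_three _ (hlevel a31)).symm
  · simp [hπ]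
  · simp [h211]
  · simp [hρ]

/-- The group of level-preserving order automorphisms of the
ethene poset is isomorphic to `S₃ × S₆`, where the `S₃`-factor simultaneously
permutes the chains `(a₂₂,a₂₁₁)`, `(b₂₂,b₂₁₁)`, `(c₂₂,c₂₁₁)` and the `S₆`-factor
consists of all permutations of the six bottom elements. -/
theorem lunn_senior_stmt17 :
    ∃ Φ : Equiv.Perm (Fin 3) × Equiv.Perm (Fin 6) ≃* ethAut,
      ∀ (π : Equiv.Perm (Fin 3)) (ρ : Equiv.Perm (Fin 6)),
        ((Φ (π, ρ) : Equiv.Perm EthP) EthP.a4 = EthP.a4) ∧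
        ((Φ (π, ρ) : Equiv.Perm EthP) EthP.a31 = EthP.a31) ∧
        (∀ i, (Φ (π, ρ) : Equiv.Perm EthP) (eth22 i) = eth22 (π i)) ∧
        (∀ i, (Φ (π, ρ) : Equiv.Perm EthP) (eth211 i) = eth211 (π i)) ∧
        (∀ j, (Φ (π, ρ) : Equiv.Perm EthP) (eth14 j) = eth14 (ρ j)) := by
  refine ⟨MulEquiv.ofBijective ethHom ⟨ethHom_injective, ethHom_surjective⟩, fun π ρ => ?_⟩
  exact ⟨rfl, rfl, ethMap_eth22 π ρ, ethMap_eth211 π ρ, ethMap_eth14 π ρ⟩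
end

section
/- The group of level-preserving order automorphisms of the poset Q (bijections α : Q → Q with ℓ(α(x)) = ℓ(x) for all x and with α(x) ≤ α(y) if and only if x ≤ y) is isomorphic to the direct product S₃ × S₂, where the S₃-factor simultaneously permutes the labels {a,b,c} across the three levels (4,2), (3²), (4,1²) (sending x₄₂ ↦ π(x)₄₂, x₃₂ ↦ π(x)₃₂, x₄₁₁ ↦ π(x)₄₁₁ for π ∈ S₃, fixing all elements with label e or f), and the S₂-factor consists of the permutations of {e₄₁₁, f₄₁₁}. -/
/-- The 15 substitution isomers of cyclopropane with empirical formulae in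
`D = {(6),(5,1),(4,2),(4,1²),(3²)}` (the poset `T₍D;G₎`, `G ≤ S₆` dihedral of
order 6). -/
inductive CycQ : Type
  | a6 | a51 | a42 | b42 | c42 | e42 | a32 | b32 | c32 | e32
  | a411 | b411 | c411 | e411 | f411
  deriving DecidableEq

instance : Fintype CycQ where
  elems := {CycQ.a6, CycQ.a51, CycQ.a42, CycQ.b42, CycQ.c42, CycQ.e42, CycQ.a32, CycQ.b32,
    CycQ.c32, CycQ.e32, CycQ.a411, CycQ.b411, CycQ.c411, CycQ.e411, CycQ.f411}
  complete := by intro x; cases x <;> decide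

open CycQ in
/-- The level function, encoding the levels `(6), (5,1), (4,2), (3²), (4,1²)`
by `5, 4, 3, 2, 1` respectively. -/
def cycLevel : CycQ → ℕ
  | a6 => 5
  | a51 => 4
  | a42 | b42 | c42 | e42 => 3
  | a32 | b32 | c32 | e32 => 2
  | a411 | b411 | c411 | e411 | f411 => 1

open CycQ in
/-- The covering relations of the cyclopropane poset. -/
def cycCovers : List (CycQ × CycQ) :=
  [(a51, a6),
   (a42, a51), (b42, a51), (c42, a51), (e42, a51),
   (b32, a42), (c32, a42),
   (a32, b42), (c32, b42),
   (a32, c42), (b32, c42),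
   (a32, e42), (b32, e42), (c32, e42), (e32, e42),
   (a411, a42), (b411, b42), (c411, c42), (e411, e42), (f411, e42)]

/-- The partial order of the cyclopropane poset: the reflexive-transitive closure
of the covering relations. -/
def cycLE : CycQ → CycQ → Prop :=
  Relation.ReflTransGen (fun x y => (x, y) ∈ cycCovers)

/-- The group of level-preserving order automorphisms of the cyclopropane poset. -/
def cycAut : Subgroup (Equiv.Perm CycQ) where
  carrier := {α | (∀ x, cycLevel (α x) = cycLevel x) ∧
    ∀ x y, cycLE (α x) (α y) ↔ cycLE x y}
  one_mem' := by
    constructor <;> simp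
  mul_mem' := by
    rintro α β ⟨hα1, hα2⟩ ⟨hβ1, hβ2⟩
    constructor
    · intro x
      simp only [Equiv.Perm.mul_apply]
      rw [hα1, hβ1]
    · intro x y
      simp only [Equiv.Perm.mul_apply]
      rw [hα2, hβ2]
  inv_mem' := by
    rintro α ⟨hα1, hα2⟩
    constructor
    · intro x
      conv_rhs => rw [← (show α (α⁻¹ x) = x from α.apply_symm_apply x)]
      rw [hα1]
    · intro x y
      conv_rhs => rw [← (show α (α⁻¹ x) = x from α.apply_symm_apply x),
        ← (show α (α⁻¹ y) = y from α.apply_symm_apply y)]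
      rw [hα2]

/-- The `(4,2)`-row indexed by `{a, b, c}` (with `e₄₂` separate). -/
def cyc42 : Fin 3 → CycQ := ![CycQ.a42, CycQ.b42, CycQ.c42]

/-- The `(3²)`-row indexed by `{a, b, c}` (with `e₃₂` separate). -/
def cyc32 : Fin 3 → CycQ := ![CycQ.a32, CycQ.b32, CycQ.c32]

/-- The `(4,1²)`-row indexed by `{a, b, c}` (with `e₄₁₁`, `f₄₁₁` separate). -/
def cyc411 : Fin 3 → CycQ := ![CycQ.a411, CycQ.b411, CycQ.c411]

/-- The pair `{e₄₁₁, f₄₁₁}`. -/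
def cycEF : Fin 2 → CycQ := ![CycQ.e411, CycQ.f411]

/-!
An automorphism fixes `e₄₂`, the only element with seven elements below it, so it permutes the
other elements `{a₄₂, b₄₂, c₄₂}` of level `(4,2)` by some `π` and the level-`(4,1²)` elements
`{e₄₁₁, f₄₁₁}` below `e₄₂` by some `ρ`. Every remaining element is the only one on its level
lying below exactly its set of higher-level elements, so, going down level by level, the
automorphism agrees everywhere with the one induced by `(π, ρ)`. The finitely many facts about
the poset are checked by `decide`, once `≤` is identified with membership in explicit up-sets.
-/

namespace Relation

variable {α : Type*} {r s : α → α → Prop}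

theorem reflTransGen_of_forall_exists_tail (f : α → ℕ) (hf : ∀ a b, r a b → f a < f b)
    (hs : ∀ a b, s a b → a = b ∨ ∃ c, s a c ∧ r c b) {a b : α} (hab : s a b) :
    ReflTransGen r a b := by
  induction b using (measure f).wf.induction with
  | _ b ih =>
    obtain rfl | ⟨c, hac, hcb⟩ := hs a b hab
    · exact .refl
    · exact (ih c (hf c b hcb) hac).tail hcb

theorem reflTransGen_apply_iff (e : α ≃ α) (h : ∀ a b, r a b → r (e a) (e b))
    (h' : ∀ a b, r a b → r (e.symm a) (e.symm b)) {a b : α} :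
    ReflTransGen r (e a) (e b) ↔ ReflTransGen r a b :=
  ⟨fun hab => by simpa [Function.onFun] using hab.lift e.symm h' _ _, fun hab => hab.lift e h _ _⟩

end Relation

theorem Equiv.Perm.exists_perm_of_apply_mem_range {ι β : Type*} [Finite ι] {f : ι → β}
    (hf : Function.Injective f) (σ : Equiv.Perm β) (h : ∀ i, σ (f i) ∈ Set.range f) :
    ∃ π : Equiv.Perm ι, ∀ i, f (π i) = σ (f i) := by
  choose g hg using h
  have hg_inj : Function.Injective g := fun i j hij =>
    hf (σ.injective (by rw [← hg i, ← hg j, hij]))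
  exact ⟨Equiv.ofBijective g (Finite.injective_iff_bijective.mp hg_inj), hg⟩

section

open CycQ

def cycUp : CycQ → Finset CycQ
  | a6 => {a6}
  | a51 => {a51, a6}
  | a42 => {a42, a51, a6}
  | b42 => {b42, a51, a6}
  | c42 => {c42, a51, a6}
  | e42 => {e42, a51, a6}
  | a32 => {a32, b42, c42, e42, a51, a6}
  | b32 => {b32, a42, c42, e42, a51, a6}
  | c32 => {c32, a42, b42, e42, a51, a6}
  | e32 => {e32, e42, a51, a6}
  | a411 => {a411, a42, a51, a6}
  | b411 => {b411, b42, a51, a6}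
  | c411 => {c411, c42, a51, a6}
  | e411 => {e411, e42, a51, a6}
  | f411 => {f411, e42, a51, a6}

theorem cycLE_iff_mem_cycUp {x y : CycQ} : cycLE x y ↔ y ∈ cycUp x := by
  constructor
  · intro h
    induction h with
    | refl => revert x; decide
    | tail _ hbc ih =>
      exact (by decide +kernel : ∀ x, ∀ p ∈ cycCovers, p.1 ∈ cycUp x → p.2 ∈ cycUp x) x _ hbc ih
  · exact Relation.reflTransGen_of_forall_exists_tail (s := fun x y => y ∈ cycUp x) cycLevel
      (by decide +kernel) (by decide +kernel)

instance : DecidableRel cycLE := fun _ _ => decidable_of_iff _ cycLE_iff_mem_cycUp.symm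

def cycFun (π : Equiv.Perm (Fin 3)) (ρ : Equiv.Perm (Fin 2)) : CycQ → CycQ
  | a6 => a6
  | a51 => a51
  | e42 => e42
  | e32 => e32
  | a42 => cyc42 (π 0)
  | b42 => cyc42 (π 1)
  | c42 => cyc42 (π 2)
  | a32 => cyc32 (π 0)
  | b32 => cyc32 (π 1)
  | c32 => cyc32 (π 2)
  | a411 => cyc411 (π 0)
  | b411 => cyc411 (π 1)
  | c411 => cyc411 (π 2)
  | e411 => cycEF (ρ 0)
  | f411 => cycEF (ρ 1)

section

variable (π : Equiv.Perm (Fin 3)) (ρ : Equiv.Perm (Fin 2))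

theorem cycFun_cyc42 (i : Fin 3) : cycFun π ρ (cyc42 i) = cyc42 (π i) := by
  fin_cases i <;> rfl

theorem cycFun_cyc32 (i : Fin 3) : cycFun π ρ (cyc32 i) = cyc32 (π i) := by
  fin_cases i <;> rfl

theorem cycFun_cyc411 (i : Fin 3) : cycFun π ρ (cyc411 i) = cyc411 (π i) := by
  fin_cases i <;> rfl

theorem cycFun_cycEF (j : Fin 2) : cycFun π ρ (cycEF j) = cycEF (ρ j) := by
  fin_cases j <;> rfl

end

theorem cycFun_one (x : CycQ) : cycFun 1 1 x = x := by
  cases x <;> rfl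

theorem cycFun_mul (π₁ π₂ : Equiv.Perm (Fin 3)) (ρ₁ ρ₂ : Equiv.Perm (Fin 2)) (x : CycQ) :
    cycFun (π₁ * π₂) (ρ₁ * ρ₂) x = cycFun π₁ ρ₁ (cycFun π₂ ρ₂ x) := by
  cases x
  case a42 | b42 | c42 => exact (cycFun_cyc42 π₁ ρ₁ _).symm
  case a32 | b32 | c32 => exact (cycFun_cyc32 π₁ ρ₁ _).symm
  case a411 | b411 | c411 => exact (cycFun_cyc411 π₁ ρ₁ _).symm
  case e411 | f411 => exact (cycFun_cycEF π₁ ρ₁ _).symm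
  all_goals rfl

def cycPerm (π : Equiv.Perm (Fin 3)) (ρ : Equiv.Perm (Fin 2)) : Equiv.Perm CycQ where
  toFun := cycFun π ρ
  invFun := cycFun π⁻¹ ρ⁻¹
  left_inv x := by rw [← cycFun_mul, inv_mul_cancel, inv_mul_cancel, cycFun_one]
  right_inv x := by rw [← cycFun_mul, mul_inv_cancel, mul_inv_cancel, cycFun_one]

theorem cycFun_mem_cycCovers :
    ∀ (π : Equiv.Perm (Fin 3)) (ρ : Equiv.Perm (Fin 2)), ∀ p ∈ cycCovers,
      (cycFun π ρ p.1, cycFun π ρ p.2) ∈ cycCovers := by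
  decide +kernel

theorem cycPerm_mem_cycAut (π : Equiv.Perm (Fin 3)) (ρ : Equiv.Perm (Fin 2)) :
    cycPerm π ρ ∈ cycAut := by
  refine ⟨(by decide +kernel : ∀ π ρ x, cycLevel (cycFun π ρ x) = cycLevel x) π ρ,
    fun x y => Relation.reflTransGen_apply_iff _ ?_ ?_⟩
  · exact fun a b hab => cycFun_mem_cycCovers π ρ (a, b) hab
  · exact fun a b hab => cycFun_mem_cycCovers π⁻¹ ρ⁻¹ (a, b) hab

def cycHom : Equiv.Perm (Fin 3) × Equiv.Perm (Fin 2) →* cycAut where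
  toFun p := ⟨cycPerm p.1 p.2, cycPerm_mem_cycAut p.1 p.2⟩
  map_one' := Subtype.ext (Equiv.ext cycFun_one)
  map_mul' p q := Subtype.ext (Equiv.ext (cycFun_mul p.1 q.1 p.2 q.2))

theorem cyc42_injective : Function.Injective cyc42 := by decide

theorem cycEF_injective : Function.Injective cycEF := by decide

theorem cycHom_injective : Function.Injective cycHom := by
  rintro ⟨π, ρ⟩ ⟨π', ρ'⟩ h
  have happ (x : CycQ) : cycFun π ρ x = cycFun π' ρ' x :=
    congrArg (fun g : cycAut => (g : Equiv.Perm CycQ) x) h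
  refine Prod.ext (Equiv.ext fun i => cyc42_injective ?_) (Equiv.ext fun j => cycEF_injective ?_)
  · rw [← cycFun_cyc42 π ρ, happ, cycFun_cyc42]
  · rw [← cycFun_cycEF π ρ, happ, cycFun_cycEF]

section Automorphism

variable {α : Equiv.Perm CycQ}

theorem card_cycLE_apply (hα : α ∈ cycAut) (x : CycQ) :
    Fintype.card {y // cycLE y (α x)} = Fintype.card {y // cycLE y x} :=
  Fintype.card_congr (α.subtypeEquiv fun y => (hα.2 y x).symm).symm

theorem apply_e42_of_mem_cycAut (hα : α ∈ cycAut) : α e42 = e42 :=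
  (by decide +kernel : ∀ y, Fintype.card {z // cycLE z y} = 7 → y = e42) _
    ((card_cycLE_apply hα e42).trans (by decide +kernel))

def cycUpperSeparated (x : CycQ) : Prop :=
  ∀ y, cycLevel y = cycLevel x → (∀ z, cycLevel x < cycLevel z → (cycLE y z ↔ cycLE x z)) → y = x

instance : DecidablePred cycUpperSeparated := fun x => by unfold cycUpperSeparated; infer_instance

theorem eq_of_not_cycUpperSeparated :
    ∀ x, ¬ cycUpperSeparated x → x = e42 ∨ (∃ i, cyc42 i = x) ∨ ∃ j, cycEF j = x := by
  decide +kernel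

theorem apply_eq_self_of_cycUpperSeparated (hα : α ∈ cycAut) {x : CycQ} (hx : cycUpperSeparated x)
    (hfix : ∀ z, cycLevel x < cycLevel z → α z = z) : α x = x :=
  hx _ (hα.1 x) fun z hz => by rw [← hα.2 x z, hfix z hz]

theorem eq_one_of_forall_not_cycUpperSeparated (hα : α ∈ cycAut)
    (h : ∀ x, ¬ cycUpperSeparated x → α x = x) : α = 1 := by
  refine Equiv.ext fun x => ?_
  induction x using (measure fun x => 5 - cycLevel x).wf.induction with
  | _ x ih =>
    by_cases hx : cycUpperSeparated x
    · refine apply_eq_self_of_cycUpperSeparated hα hx fun z hz => ih z ?_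
      have : cycLevel z ≤ 5 := (by decide : ∀ z, cycLevel z ≤ 5) z
      show 5 - cycLevel z < 5 - cycLevel x
      omega
    · exact h x hx

theorem eq_of_forall_not_cycUpperSeparated {β : Equiv.Perm CycQ} (hα : α ∈ cycAut) (hβ : β ∈ cycAut)
    (h : ∀ x, ¬ cycUpperSeparated x → α x = β x) : α = β :=
  inv_mul_eq_one.mp <| eq_one_of_forall_not_cycUpperSeparated (mul_mem (inv_mem hα) hβ) fun x hx => by
    rw [Equiv.Perm.mul_apply, ← h x hx]; exact α.symm_apply_apply x

end Automorphism

theorem cycHom_surjective : Function.Surjective cycHom := by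
  rintro ⟨α, hα⟩
  have he42 := apply_e42_of_mem_cycAut hα
  obtain ⟨π, hπ⟩ := Equiv.Perm.exists_perm_of_apply_mem_range cyc42_injective α fun i => by
    refine (by decide : ∀ z, cycLevel z = 3 → z ≠ e42 → ∃ i, cyc42 i = z) _ ?_ ?_
    · rw [hα.1]; revert i; decide
    · rw [← he42]; exact α.injective.ne (by revert i; decide)
  obtain ⟨ρ, hρ⟩ := Equiv.Perm.exists_perm_of_apply_mem_range cycEF_injective α fun j => by
    refine (by decide +kernel : ∀ z, cycLevel z = 1 → cycLE z e42 → ∃ j, cycEF j = z) _ ?_ ?_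
    · rw [hα.1]; revert j; decide
    · rw [← he42, hα.2]; revert j; decide +kernel
  refine ⟨(π, ρ), Subtype.ext (eq_of_forall_not_cycUpperSeparated (cycPerm_mem_cycAut π ρ) hα
    fun x hx => ?_)⟩
  obtain rfl | ⟨i, rfl⟩ | ⟨j, rfl⟩ := eq_of_not_cycUpperSeparated x hx
  · exact he42.symm
  · exact (cycFun_cyc42 π ρ i).trans (hπ i)
  · exact (cycFun_cycEF π ρ j).trans (hρ j)

end

/-- The group of level-preserving order automorphisms of the
cyclopropane poset is isomorphic to `S₃ × S₂`, where the `S₃`-factor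
simultaneously permutes the labels `{a,b,c}` across the levels `(4,2)`, `(3²)`,
`(4,1²)` (fixing all elements labelled `e` or `f`), and the `S₂`-factor consists
of the permutations of `{e₄₁₁, f₄₁₁}`. -/
theorem lunn_senior_stmt18 :
    ∃ Φ : Equiv.Perm (Fin 3) × Equiv.Perm (Fin 2) ≃* cycAut,
      ∀ (π : Equiv.Perm (Fin 3)) (ρ : Equiv.Perm (Fin 2)),
        ((Φ (π, ρ) : Equiv.Perm CycQ) CycQ.a6 = CycQ.a6) ∧
        ((Φ (π, ρ) : Equiv.Perm CycQ) CycQ.a51 = CycQ.a51) ∧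
        ((Φ (π, ρ) : Equiv.Perm CycQ) CycQ.e42 = CycQ.e42) ∧
        ((Φ (π, ρ) : Equiv.Perm CycQ) CycQ.e32 = CycQ.e32) ∧
        (∀ i, (Φ (π, ρ) : Equiv.Perm CycQ) (cyc42 i) = cyc42 (π i)) ∧
        (∀ i, (Φ (π, ρ) : Equiv.Perm CycQ) (cyc32 i) = cyc32 (π i)) ∧
        (∀ i, (Φ (π, ρ) : Equiv.Perm CycQ) (cyc411 i) = cyc411 (π i)) ∧
        (∀ j, (Φ (π, ρ) : Equiv.Perm CycQ) (cycEF j) = cycEF (ρ j)) := by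
  refine ⟨MulEquiv.ofBijective cycHom ⟨cycHom_injective, cycHom_surjective⟩, fun π ρ => ?_⟩
  exact ⟨rfl, rfl, rfl, rfl, cycFun_cyc42 π ρ, cycFun_cyc32 π ρ, cycFun_cyc411 π ρ,
    cycFun_cycEF π ρ⟩
end
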